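/- arXiv:2601.20170 — 2 statements merged into one kernel-verified Lean document; each statement's English description precedes it below -/
import Mathlib

section
/- Let c ∈ ℝ^m with c ≥ 0 componentwise, and let z* = (w*, b*) be a global minimizer of z ↦ F₁(z, c). Set u*_i := u_i(z*) for i = 1,…,m. Then z* is the unique global minimizer of z ↦ F₁(z, c) if and only if both of the following hold: Σ_{i: u*_i = 0, y_i = −1} c_i + Σ_{i: u*_i > 0, y_i = −1} c_i ≠ Σ_{i: u*_i > 0, y_i = 1} c_i, and Σ_{i: u*_i = 0, y_i = 1} c_i + Σ_{i: u*_i > 0, y_i = 1} c_i ≠ Σ_{i: u*_i > 0, y_i = −1} c_i. -/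
open scoped RealInnerProductSpace BigOperators

noncomputable section

/-- The 0/1 loss: `1` if `t > 0`, `0` otherwise. -/
def l01 (t : ℝ) : ℝ := if 0 < t then 1 else 0

/-- The ramp loss with parameter `γ`. -/
def ramp (γ t : ℝ) : ℝ := if γ < t then 1 else if 0 ≤ t then t else 0

variable {n m : ℕ}

/-- The margin residual `u_i(z) = 1 - y_i (⟨w, x_i⟩ + b)` for `z = (w, b)`. -/
def uu (x : Fin m → EuclideanSpace ℝ (Fin n)) (y : Fin m → ℝ)
    (z : EuclideanSpace ℝ (Fin n) × ℝ) (i : Fin m) : ℝ :=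
  1 - y i * (⟪z.1, x i⟫ + z.2)

/-- The 0/1-loss SVM objective `F_{0/1}`. -/
def F01 (x : Fin m → EuclideanSpace ℝ (Fin n)) (y : Fin m → ℝ) (lam : ℝ)
    (z : EuclideanSpace ℝ (Fin n) × ℝ) : ℝ :=
  (1 / 2) * ‖z.1‖ ^ 2 + lam * ∑ i, l01 (uu x y z i)

/-- The hinge-loss SVM objective `F₁(z, c)`. -/
def F1 (x : Fin m → EuclideanSpace ℝ (Fin n)) (y : Fin m → ℝ)
    (c : EuclideanSpace ℝ (Fin m)) (z : EuclideanSpace ℝ (Fin n) × ℝ) : ℝ :=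
  (1 / 2) * ‖z.1‖ ^ 2 + ∑ i, c i * max (uu x y z i) 0

/-- The dual quadratic objective `G(α) = (1/2)⟨α, Qα⟩ - Σ αᵢ`,
where `Q_{ij} = y_i y_j ⟨x_i, x_j⟩`. -/
def Gfun (x : Fin m → EuclideanSpace ℝ (Fin n)) (y : Fin m → ℝ)
    (α : EuclideanSpace ℝ (Fin m)) : ℝ :=
  (1 / 2) * ∑ i, ∑ j, α i * (y i * y j * ⟪x i, x j⟫) * α j - ∑ i, α i

/-- The ℓ₀ "norm": the number of nonzero entries. -/
def norm0 (α : EuclideanSpace ℝ (Fin m)) : ℝ := (({i | α i ≠ 0} : Set (Fin m)).ncard : ℝ)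

/-- Feasibility for the dual problem `(D_{0/1})`. -/
def DFeas (y : Fin m → ℝ) (α : EuclideanSpace ℝ (Fin m)) : Prop :=
  (∀ i, 0 ≤ α i) ∧ ∑ i, y i * α i = 0

/-- `α*` is a local minimizer of the dual problem `(D_{0/1})` with parameter `μ`. -/
def DLocalMin (x : Fin m → EuclideanSpace ℝ (Fin n)) (y : Fin m → ℝ) (μ : ℝ)
    (αs : EuclideanSpace ℝ (Fin m)) : Prop :=
  DFeas y αs ∧ ∃ ε > 0, ∀ α : EuclideanSpace ℝ (Fin m), DFeas y α → dist α αs ≤ ε →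
    Gfun x y αs + μ * norm0 αs ≤ Gfun x y α + μ * norm0 α

/-- The KKT system (KKT-T*) for `(D_I)` with `I = T* = {i : α*_i ≠ 0}`:
`Qα* - 1 + u* + b* y = 0`; `α*_i ≥ 0`, `u*_i ≤ 0`, `α*_i u*_i = 0` on `T*`;
(`α*_i = 0` off `T*` holds by definition of `T*`); and `⟨y, α*⟩ = 0`. -/
def KKTT (x : Fin m → EuclideanSpace ℝ (Fin n)) (y : Fin m → ℝ)
    (αs us : EuclideanSpace ℝ (Fin m)) (bs : ℝ) : Prop :=
  (∀ i, (∑ j, (y i * y j * ⟪x i, x j⟫) * αs j) - 1 + us i + bs * y i = 0) ∧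
  (∀ i, αs i ≠ 0 → 0 ≤ αs i ∧ us i ≤ 0 ∧ αs i * us i = 0) ∧
  ∑ i, y i * αs i = 0

/-- The ramp-loss SVM objective of `(P_r)`. -/
def PrObj (x : Fin m → EuclideanSpace ℝ (Fin n)) (y : Fin m → ℝ) (ρ γ : ℝ)
    (z : EuclideanSpace ℝ (Fin n) × ℝ) : ℝ :=
  (1 / 2) * ‖z.1‖ ^ 2 + ρ * ∑ i, ramp γ (uu x y z i)

/-- The penalty objective of problem (pen). -/
def Pen (x : Fin m → EuclideanSpace ℝ (Fin n)) (y : Fin m → ℝ) (ρ γ : ℝ)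
    (p : (EuclideanSpace ℝ (Fin n) × ℝ) × EuclideanSpace ℝ (Fin m)) : ℝ :=
  (1 / 2) * ‖p.1.1‖ ^ 2 + ρ * ∑ i, |uu x y p.1 i - p.2 i| + ρ * γ * ∑ i, l01 (p.2 i)

/-- The smooth part `Φ(z, v)` of the penalty objective. -/
def Phi (x : Fin m → EuclideanSpace ℝ (Fin n)) (y : Fin m → ℝ) (ρ : ℝ)
    (p : (EuclideanSpace ℝ (Fin n) × ℝ) × EuclideanSpace ℝ (Fin m)) : ℝ :=
  (1 / 2) * ‖p.1.1‖ ^ 2 + ρ * ∑ i, |uu x y p.1 i - p.2 i|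

/-- The KKT system (KKT-PI) for `(P_{0/1})` at `z*`. -/
def KKTPI (x : Fin m → EuclideanSpace ℝ (Fin n)) (y : Fin m → ℝ)
    (zs : EuclideanSpace ℝ (Fin n) × ℝ) (αs : EuclideanSpace ℝ (Fin m)) : Prop :=
  zs.1 = ∑ i, (αs i * y i) • x i ∧
  (∀ i, uu x y zs i ≤ 0 → 0 ≤ αs i ∧ αs i * uu x y zs i = 0) ∧
  (∀ i, ¬ uu x y zs i ≤ 0 → αs i = 0) ∧
  ∑ i, y i * αs i = 0


lemma maxcvx (a b : ℝ) {t : ℝ} (h0 : 0 ≤ t) (h1 : t ≤ 1) :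
    max ((1-t)*a + t*b) 0 ≤ (1-t) * max a 0 + t * max b 0 := by
  apply max_le
  · nlinarith [le_max_left a 0, le_max_left b 0, le_max_right a 0, le_max_right b 0]
  · nlinarith [le_max_right a 0, le_max_right b 0]

lemma perP (c u yv ε : ℝ) (hy : yv = 1 ∨ yv = -1) (hε : 0 ≤ ε)
    (hsmall : u ≠ 0 → ε ≤ |u|) :
    c * max (u - yv * ε) 0 =
      c * max u 0 + ε * ((if u = 0 ∧ yv = -1 then c else 0) +
        (if 0 < u ∧ yv = -1 then c else 0) - (if 0 < u ∧ yv = 1 then c else 0)) := by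
  have h1 : (1:ℝ) ≠ -1 := by norm_num
  have h2 : (-1:ℝ) ≠ 1 := by norm_num
  rcases hy with h | h <;> subst h <;> rcases lt_trichotomy u 0 with hu | hu | hu
  · rw [max_eq_right (by linarith : u - 1 * ε ≤ 0), max_eq_right hu.le,
      if_neg (fun h => hu.ne h.1), if_neg (fun h => absurd h.1 (not_lt.mpr hu.le)),
      if_neg (fun h => absurd h.1 (not_lt.mpr hu.le))]
    ring
  · subst hu
    rw [max_eq_right (by linarith : (0:ℝ) - 1 * ε ≤ 0),
      if_neg (fun h => by norm_num at h), if_neg (fun h => lt_irrefl _ h.1),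
      if_neg (fun h => lt_irrefl _ h.1)]
    simp
  · have hεu : ε ≤ u := by
      have := hsmall (ne_of_gt hu); rwa [abs_of_pos hu] at this
    rw [max_eq_left (by linarith : (0:ℝ) ≤ u - 1 * ε), max_eq_left hu.le,
      if_neg (fun h => absurd h.1 hu.ne'), if_neg (fun h => by norm_num at h),
      if_pos ⟨hu, rfl⟩]
    ring
  · have hεu : ε ≤ -u := by
      have := hsmall (ne_of_lt hu); rwa [abs_of_neg hu] at this
    rw [max_eq_right (by linarith : u - (-1) * ε ≤ 0), max_eq_right hu.le,
      if_neg (fun h => hu.ne h.1), if_neg (fun h => absurd h.1 (not_lt.mpr hu.le)),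
      if_neg (fun h => absurd h.1 (not_lt.mpr hu.le))]
    ring
  · subst hu
    rw [max_eq_left (by linarith : (0:ℝ) ≤ 0 - (-1) * ε),
      if_pos ⟨rfl, rfl⟩, if_neg (fun h => lt_irrefl _ h.1),
      if_neg (fun h => lt_irrefl _ h.1), max_self]
    ring
  · rw [max_eq_left (by linarith : (0:ℝ) ≤ u - (-1) * ε), max_eq_left hu.le,
      if_neg (fun h => absurd h.1 hu.ne'), if_pos ⟨hu, rfl⟩,
      if_neg (fun h => by norm_num at h)]
    ring

lemma perM (c u yv ε : ℝ) (hy : yv = 1 ∨ yv = -1) (hε : 0 ≤ ε)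
    (hsmall : u ≠ 0 → ε ≤ |u|) :
    c * max (u + yv * ε) 0 =
      c * max u 0 + ε * ((if u = 0 ∧ yv = 1 then c else 0) +
        (if 0 < u ∧ yv = 1 then c else 0) - (if 0 < u ∧ yv = -1 then c else 0)) := by
  have h1 : (1:ℝ) ≠ -1 := by norm_num
  have h2 : (-1:ℝ) ≠ 1 := by norm_num
  rcases hy with h | h <;> subst h <;> rcases lt_trichotomy u 0 with hu | hu | hu
  · have hεu : ε ≤ -u := by
      have := hsmall (ne_of_lt hu); rwa [abs_of_neg hu] at this
    rw [max_eq_right (by linarith : u + 1 * ε ≤ 0), max_eq_right hu.le,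
      if_neg (fun h => hu.ne h.1), if_neg (fun h => absurd h.1 (not_lt.mpr hu.le)),
      if_neg (fun h => absurd h.1 (not_lt.mpr hu.le))]
    ring
  · subst hu
    rw [max_eq_left (by linarith : (0:ℝ) ≤ 0 + 1 * ε),
      if_pos ⟨rfl, rfl⟩, if_neg (fun h => lt_irrefl _ h.1),
      if_neg (fun h => lt_irrefl _ h.1), max_self]
    ring
  · rw [max_eq_left (by linarith : (0:ℝ) ≤ u + 1 * ε), max_eq_left hu.le,
      if_neg (fun h => absurd h.1 hu.ne'), if_pos ⟨hu, rfl⟩,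
      if_neg (fun h => by norm_num at h)]
    ring
  · rw [max_eq_right (by linarith : u + (-1) * ε ≤ 0), max_eq_right hu.le,
      if_neg (fun h => hu.ne h.1), if_neg (fun h => absurd h.1 (not_lt.mpr hu.le)),
      if_neg (fun h => absurd h.1 (not_lt.mpr hu.le))]
    ring
  · subst hu
    rw [max_eq_right (by linarith : (0:ℝ) + (-1) * ε ≤ 0),
      if_neg (fun h => by norm_num at h), if_neg (fun h => lt_irrefl _ h.1),
      if_neg (fun h => lt_irrefl _ h.1)]
    simp
  · have hεu : ε ≤ u := by
      have := hsmall (ne_of_gt hu); rwa [abs_of_pos hu] at this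
    rw [max_eq_left (by linarith : (0:ℝ) ≤ u + (-1) * ε), max_eq_left hu.le,
      if_neg (fun h => absurd h.1 hu.ne'), if_neg (fun h => by norm_num at h),
      if_pos ⟨hu, rfl⟩]
    ring

lemma exists_delta (hm : 0 < m) (u : Fin m → ℝ) :
    ∃ δ : ℝ, 0 < δ ∧ ∀ i, u i ≠ 0 → δ ≤ |u i| := by
  have : Nonempty (Fin m) := ⟨⟨0, hm⟩⟩
  refine ⟨Finset.univ.inf' Finset.univ_nonempty (fun i => if u i = 0 then 1 else |u i|),
    ?_, ?_⟩
  · rw [Finset.lt_inf'_iff]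
    intro i _
    split_ifs with h
    · norm_num
    · exact abs_pos.mpr h
  · intro i hi
    have := Finset.inf'_le (fun i => if u i = 0 then 1 else |u i|) (Finset.mem_univ i)
    rwa [if_neg hi] at this


lemma F1shiftP (x : Fin m → EuclideanSpace ℝ (Fin n)) (y : Fin m → ℝ)
    (c : EuclideanSpace ℝ (Fin m)) (zs : EuclideanSpace ℝ (Fin n) × ℝ)
    (hy : ∀ i, y i = 1 ∨ y i = -1) (ε : ℝ) (hε : 0 ≤ ε)
    (hsmall : ∀ i, uu x y zs i ≠ 0 → ε ≤ |uu x y zs i|) :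
    F1 x y c (zs.1, zs.2 + ε) = F1 x y c zs +
      ε * ((∑ i, if uu x y zs i = 0 ∧ y i = -1 then c i else 0) +
        (∑ i, if 0 < uu x y zs i ∧ y i = -1 then c i else 0) -
        (∑ i, if 0 < uu x y zs i ∧ y i = 1 then c i else 0)) := by
  unfold F1
  have hsum : ∀ i ∈ Finset.univ, c i * max (uu x y (zs.1, zs.2 + ε) i) 0 =
      c i * max (uu x y zs i) 0 + ε * ((if uu x y zs i = 0 ∧ y i = -1 then c i else 0) +
        (if 0 < uu x y zs i ∧ y i = -1 then c i else 0) -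
        (if 0 < uu x y zs i ∧ y i = 1 then c i else 0)) := by
    intro i _
    have h : uu x y (zs.1, zs.2 + ε) i = uu x y zs i - y i * ε := by
      simp only [uu]; ring
    rw [h]
    exact perP (c i) _ (y i) ε (hy i) hε (hsmall i)
  rw [Finset.sum_congr rfl hsum]
  rw [Finset.sum_add_distrib, ← Finset.mul_sum, Finset.sum_sub_distrib,
    Finset.sum_add_distrib]
  ring

lemma F1shiftM (x : Fin m → EuclideanSpace ℝ (Fin n)) (y : Fin m → ℝ)
    (c : EuclideanSpace ℝ (Fin m)) (zs : EuclideanSpace ℝ (Fin n) × ℝ)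
    (hy : ∀ i, y i = 1 ∨ y i = -1) (ε : ℝ) (hε : 0 ≤ ε)
    (hsmall : ∀ i, uu x y zs i ≠ 0 → ε ≤ |uu x y zs i|) :
    F1 x y c (zs.1, zs.2 - ε) = F1 x y c zs +
      ε * ((∑ i, if uu x y zs i = 0 ∧ y i = 1 then c i else 0) +
        (∑ i, if 0 < uu x y zs i ∧ y i = 1 then c i else 0) -
        (∑ i, if 0 < uu x y zs i ∧ y i = -1 then c i else 0)) := by
  unfold F1
  have hsum : ∀ i ∈ Finset.univ, c i * max (uu x y (zs.1, zs.2 - ε) i) 0 =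
      c i * max (uu x y zs i) 0 + ε * ((if uu x y zs i = 0 ∧ y i = 1 then c i else 0) +
        (if 0 < uu x y zs i ∧ y i = 1 then c i else 0) -
        (if 0 < uu x y zs i ∧ y i = -1 then c i else 0)) := by
    intro i _
    have h : uu x y (zs.1, zs.2 - ε) i = uu x y zs i + y i * ε := by
      simp only [uu]; ring
    rw [h]
    exact perM (c i) _ (y i) ε (hy i) hε (hsmall i)
  rw [Finset.sum_congr rfl hsum]
  rw [Finset.sum_add_distrib, ← Finset.mul_sum, Finset.sum_sub_distrib,
    Finset.sum_add_distrib]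
  ring

lemma F1_combo (x : Fin m → EuclideanSpace ℝ (Fin n)) (y : Fin m → ℝ)
    (c : EuclideanSpace ℝ (Fin m)) (hc : ∀ i, 0 ≤ c i)
    (zs z : EuclideanSpace ℝ (Fin n) × ℝ) (hw : z.1 = zs.1)
    (t : ℝ) (h0 : 0 ≤ t) (h1 : t ≤ 1) :
    F1 x y c (zs.1, (1-t)*zs.2 + t*z.2) ≤ (1-t) * F1 x y c zs + t * F1 x y c z := by
  unfold F1
  have huu : ∀ i, uu x y (zs.1, (1-t)*zs.2 + t*z.2) i
      = (1-t) * uu x y zs i + t * uu x y z i := by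
    intro i; simp only [uu, hw]; ring
  have hsum : ∑ i, c i * max (uu x y (zs.1, (1-t)*zs.2+t*z.2) i) 0 ≤
      (1-t) * ∑ i, c i * max (uu x y zs i) 0 + t * ∑ i, c i * max (uu x y z i) 0 := by
    rw [Finset.mul_sum, Finset.mul_sum, ← Finset.sum_add_distrib]
    refine Finset.sum_le_sum fun i _ => ?_
    rw [huu i]
    calc c i * max ((1-t) * uu x y zs i + t * uu x y z i) 0
        ≤ c i * ((1-t) * max (uu x y zs i) 0 + t * max (uu x y z i) 0) :=
          mul_le_mul_of_nonneg_left (maxcvx _ _ h0 h1) (hc i)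
      _ = (1-t) * (c i * max (uu x y zs i) 0) + t * (c i * max (uu x y z i) 0) := by ring
  have hfst : ((zs.1, (1-t)*zs.2+t*z.2) : EuclideanSpace ℝ (Fin n) × ℝ).1 = zs.1 := rfl
  rw [hfst, hw]
  linarith [hsum]

/-- a global minimizer `z*` of `z ↦ F₁(z, c)` is the unique global
minimizer iff the two weight-sum inequations of Lemma 4.2 hold. -/
theorem stmt14 {n m : ℕ} (hn : 0 < n) (hm : 0 < m)
    (x : Fin m → EuclideanSpace ℝ (Fin n)) (y : Fin m → ℝ)
    (hy : ∀ i, y i = 1 ∨ y i = -1)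
    (c : EuclideanSpace ℝ (Fin m)) (hc : ∀ i, 0 ≤ c i)
    (zs : EuclideanSpace ℝ (Fin n) × ℝ)
    (hglob : ∀ z : EuclideanSpace ℝ (Fin n) × ℝ, F1 x y c zs ≤ F1 x y c z) :
    ((∀ z : EuclideanSpace ℝ (Fin n) × ℝ, F1 x y c zs ≤ F1 x y c z) ∧
      ∀ z : EuclideanSpace ℝ (Fin n) × ℝ, F1 x y c z ≤ F1 x y c zs → z = zs)
    ↔ (((∑ i, if uu x y zs i = 0 ∧ y i = -1 then c i else 0) +
          (∑ i, if 0 < uu x y zs i ∧ y i = -1 then c i else 0) ≠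
          ∑ i, if 0 < uu x y zs i ∧ y i = 1 then c i else 0) ∧
        ((∑ i, if uu x y zs i = 0 ∧ y i = 1 then c i else 0) +
          (∑ i, if 0 < uu x y zs i ∧ y i = 1 then c i else 0) ≠
          ∑ i, if 0 < uu x y zs i ∧ y i = -1 then c i else 0)) := by
  obtain ⟨δ, hδpos, hδsmall⟩ := exists_delta hm (uu x y zs)
  constructor
  · intro h
    constructor
    · intro hEq
      have hshift := F1shiftP x y c zs hy δ hδpos.le hδsmall
      have h0 : F1 x y c (zs.1, zs.2 + δ) = F1 x y c zs := by
        rw [hshift, hEq]; ring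
      have h2 := congrArg Prod.snd (h.2 _ (le_of_eq h0))
      simp only at h2
      linarith
    · intro hEq
      have hshift := F1shiftM x y c zs hy δ hδpos.le hδsmall
      have h0 : F1 x y c (zs.1, zs.2 - δ) = F1 x y c zs := by
        rw [hshift, hEq]; ring
      have h2 := congrArg Prod.snd (h.2 _ (le_of_eq h0))
      simp only at h2
      linarith
  · rintro ⟨hA, hB⟩
    refine ⟨hglob, fun z hz => ?_⟩
    have hze : F1 x y c z = F1 x y c zs := le_antisymm hz (hglob z)
    -- Step 1: first components agree
    have hw : z.1 = zs.1 := by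
      by_contra hne
      set wm : EuclideanSpace ℝ (Fin n) := (1/2 : ℝ) • (zs.1 + z.1) with hwm
      have humid : ∀ i, uu x y ((wm, (zs.2 + z.2)/2) : EuclideanSpace ℝ (Fin n) × ℝ) i
          = (1-(1/2:ℝ)) * uu x y zs i + (1/2) * uu x y z i := by
        intro i
        simp only [uu, hwm, inner_add_left, real_inner_smul_left]
        ring
      have hsum : ∑ i, c i * max (uu x y ((wm, (zs.2 + z.2)/2) :
            EuclideanSpace ℝ (Fin n) × ℝ) i) 0 ≤
          (1/2) * ∑ i, c i * max (uu x y zs i) 0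
            + (1/2) * ∑ i, c i * max (uu x y z i) 0 := by
        rw [Finset.mul_sum, Finset.mul_sum, ← Finset.sum_add_distrib]
        refine Finset.sum_le_sum fun i _ => ?_
        rw [humid i]
        calc c i * max ((1-(1/2:ℝ)) * uu x y zs i + (1/2) * uu x y z i) 0
            ≤ c i * ((1-(1/2:ℝ)) * max (uu x y zs i) 0 + (1/2) * max (uu x y z i) 0) :=
              mul_le_mul_of_nonneg_left (maxcvx _ _ (by norm_num) (by norm_num)) (hc i)
          _ = (1/2) * (c i * max (uu x y zs i) 0) + (1/2) * (c i * max (uu x y z i) 0) := by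
              ring
      have hnorm : (1/2:ℝ) * ‖wm‖^2 = (1/2)*((1/2)*‖zs.1‖^2) + (1/2)*((1/2)*‖z.1‖^2)
          - (1/8)*‖zs.1 - z.1‖^2 := by
        have h1 : ‖wm‖ = (1/2) * ‖zs.1 + z.1‖ := by
          rw [hwm, norm_smul]; norm_num
        have h2 := @norm_add_sq_real (EuclideanSpace ℝ (Fin n)) _ _ zs.1 z.1
        have h3 := @norm_sub_sq_real (EuclideanSpace ℝ (Fin n)) _ _ zs.1 z.1
        rw [h1]; nlinarith [h2, h3]
      have hmidle : F1 x y c ((wm, (zs.2 + z.2)/2) : EuclideanSpace ℝ (Fin n) × ℝ)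
          ≤ F1 x y c zs - (1/8)*‖zs.1 - z.1‖^2 := by
        unfold F1
        have : F1 x y c z = F1 x y c zs := hze
        unfold F1 at this
        simp only at hsum ⊢
        linarith [hsum, hnorm]
      have hge := hglob ((wm, (zs.2 + z.2)/2) : EuclideanSpace ℝ (Fin n) × ℝ)
      have hsq : ‖zs.1 - z.1‖^2 ≤ 0 := by linarith
      have hsq0 : ‖zs.1 - z.1‖^2 = 0 := le_antisymm hsq (sq_nonneg _)
      have : zs.1 - z.1 = 0 := by
        have := (pow_eq_zero_iff two_ne_zero).mp hsq0
        exact norm_eq_zero.mp this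
      exact hne (sub_eq_zero.mp this).symm
    -- Step 2: second components agree
    have hb : z.2 = zs.2 := by
      rcases lt_trichotomy zs.2 z.2 with hlt | heq | hlt
      · exfalso
        set s : ℝ := z.2 - zs.2 with hs
        have hspos : 0 < s := by rw [hs]; linarith
        set ε : ℝ := min δ s with hε
        have hεpos : 0 < ε := lt_min hδpos hspos
        set t : ℝ := ε / s with ht
        have ht0 : 0 ≤ t := (div_pos hεpos hspos).le
        have ht1 : t ≤ 1 := (div_le_one hspos).mpr (min_le_right _ _)
        have hts : t * s = ε := div_mul_cancel₀ ε hspos.ne'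
        rw [hs] at hts
        have hpt : (1-t)*zs.2 + t*z.2 = zs.2 + ε := by linear_combination hts
        have hcombo := F1_combo x y c hc zs z hw t ht0 ht1
        rw [hpt, hze] at hcombo
        have hle : F1 x y c (zs.1, zs.2 + ε) ≤ F1 x y c zs := by linarith
        have heq2 : F1 x y c (zs.1, zs.2 + ε) = F1 x y c zs :=
          le_antisymm hle (hglob _)
        have hshift := F1shiftP x y c zs hy ε hεpos.le
          (fun i hi => le_trans (min_le_left _ _) (hδsmall i hi))
        rw [heq2] at hshift
        have hmul : ε * ((∑ i, if uu x y zs i = 0 ∧ y i = -1 then c i else 0) +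
            (∑ i, if 0 < uu x y zs i ∧ y i = -1 then c i else 0) -
            (∑ i, if 0 < uu x y zs i ∧ y i = 1 then c i else 0)) = 0 := by linarith
        rcases mul_eq_zero.mp hmul with h | h
        · exact absurd h hεpos.ne'
        · exact hA (by linarith)
      · exact heq.symm
      · exfalso
        set s : ℝ := zs.2 - z.2 with hs
        have hspos : 0 < s := by rw [hs]; linarith
        set ε : ℝ := min δ s with hε
        have hεpos : 0 < ε := lt_min hδpos hspos
        set t : ℝ := ε / s with ht
        have ht0 : 0 ≤ t := (div_pos hεpos hspos).le
        have ht1 : t ≤ 1 := (div_le_one hspos).mpr (min_le_right _ _)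
        have hts : t * s = ε := div_mul_cancel₀ ε hspos.ne'
        rw [hs] at hts
        have hpt : (1-t)*zs.2 + t*z.2 = zs.2 - ε := by linear_combination -hts
        have hcombo := F1_combo x y c hc zs z hw t ht0 ht1
        rw [hpt, hze] at hcombo
        have hle : F1 x y c (zs.1, zs.2 - ε) ≤ F1 x y c zs := by linarith
        have heq2 : F1 x y c (zs.1, zs.2 - ε) = F1 x y c zs :=
          le_antisymm hle (hglob _)
        have hshift := F1shiftM x y c zs hy ε hεpos.le
          (fun i hi => le_trans (min_le_left _ _) (hδsmall i hi))
        rw [heq2] at hshift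
        have hmul : ε * ((∑ i, if uu x y zs i = 0 ∧ y i = 1 then c i else 0) +
            (∑ i, if 0 < uu x y zs i ∧ y i = 1 then c i else 0) -
            (∑ i, if 0 < uu x y zs i ∧ y i = -1 then c i else 0)) = 0 := by linarith
        rcases mul_eq_zero.mp hmul with h | h
        · exact absurd h hεpos.ne'
        · exact hB (by linarith)
    exact Prod.ext hw hb

end
end

section
/- Call an index set I ⊆ {1,…,m} separable if there exists (w, b) ∈ ℝ^n × ℝ with y_i(⟨w, x_i⟩ + b) ≥ 1 for all i ∈ I. Suppose I* is separable and |I*| ≥ |I| for every separable subset I of {1,…,m}. If z* is a global minimizer of the hard-margin problem (P_{I*}), then for every λ > 0, z* is a local minimizer of (P_{0/1}). -/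
open scoped RealInnerProductSpace BigOperators

noncomputable section

variable {n m : ℕ}

/-! Let `T(z) = {i | u_i(z) ≤ 0}` be the set of satisfied margin constraints. Strictly violated
constraints stay violated near `z*`, so `T(z) ⊆ T(z*)` close to `z*`. If `T(z) = T(z*)`, then `z`
is feasible for `(P_{I*})` (as `I* ⊆ T(z*)`) and its norm term is at least that of `z*`; otherwise
the loss term grows by at least `λ`, which dominates the change of the continuous norm term near
`z*`. -/

open Finset

section CountingPenalty

variable {X ι : Type*} [TopologicalSpace X] [Fintype ι]

theorem isLocalMin_add_mul_card_pos {g : X → ℝ} {u : ι → X → ℝ} {z₀ : X} {lam : ℝ}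
    (hg : ContinuousAt g z₀) (hu : ∀ i, ContinuousAt (u i) z₀) (hlam : 0 < lam)
    (hmin : ∀ z, (∀ i, u i z₀ ≤ 0 → u i z ≤ 0) → g z₀ ≤ g z) :
    IsLocalMin (fun z => g z + lam * #{i | 0 < u i z}) z₀ := by
  have hviolated : ∀ᶠ z in nhds z₀, ∀ i, 0 < u i z₀ → 0 < u i z := by
    refine Filter.eventually_all.2 fun i => ?_
    by_cases h : 0 < u i z₀
    · exact ((hu i).eventually (lt_mem_nhds h)).mono fun _ hz _ => hz
    · exact Filter.Eventually.of_forall fun _ h' => absurd h' h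
  have hclose : ∀ᶠ z in nhds z₀, g z₀ - lam < g z :=
    hg.eventually (lt_mem_nhds (by linarith))
  filter_upwards [hviolated, hclose] with z hviolated hclose
  have hsub : ({i | 0 < u i z₀} : Finset ι) ⊆ ({i | 0 < u i z} : Finset ι) := fun i => by
    simpa using hviolated i
  rcases (card_le_card hsub).eq_or_lt with heq | hlt
  · have hset := eq_of_subset_of_card_le hsub heq.ge
    have hgz : g z₀ ≤ g z := hmin z fun i hi => by
      have hmem := Finset.ext_iff.1 hset i
      simp only [mem_filter, mem_univ, true_and] at hmem
      exact not_lt.1 fun hpos => hi.not_gt (hmem.2 hpos)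
    rw [hset]
    linarith
  · have hstep : (#{i | 0 < u i z₀} : ℝ) + 1 ≤ #{i | 0 < u i z} := by exact_mod_cast hlt
    nlinarith

end CountingPenalty

theorem sum_l01_eq_card {ι : Type*} [Fintype ι] (t : ι → ℝ) :
    ∑ i, l01 (t i) = #{i | 0 < t i} := by
  simp [l01, sum_boole]

section Margins

variable (x : Fin m → EuclideanSpace ℝ (Fin n)) (y : Fin m → ℝ)

theorem uu_nonpos_iff (z : EuclideanSpace ℝ (Fin n) × ℝ) (i : Fin m) :
    uu x y z i ≤ 0 ↔ 1 ≤ y i * (⟪z.1, x i⟫ + z.2) :=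
  sub_nonpos

theorem continuous_uu (i : Fin m) : Continuous fun z => uu x y z i := by
  unfold uu
  fun_prop

theorem F01_eq (lam : ℝ) :
    F01 x y lam = fun z => (1 / 2) * ‖z.1‖ ^ 2 + lam * #{i | 0 < uu x y z i} := by
  funext z
  rw [F01, sum_l01_eq_card]

end Margins

theorem stmt15_general {n m : ℕ}
    (x : Fin m → EuclideanSpace ℝ (Fin n)) (y : Fin m → ℝ)
    (Istar : Finset (Fin m))
    (zs : EuclideanSpace ℝ (Fin n) × ℝ)
    (hfeas : ∀ i ∈ Istar, 1 ≤ y i * (⟪zs.1, x i⟫ + zs.2))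
    (hglob : ∀ z : EuclideanSpace ℝ (Fin n) × ℝ,
      (∀ i ∈ Istar, 1 ≤ y i * (⟪z.1, x i⟫ + z.2)) →
      (1 / 2) * ‖zs.1‖ ^ 2 ≤ (1 / 2) * ‖z.1‖ ^ 2) :
    ∀ lam : ℝ, 0 < lam →
      ∃ ε > 0, ∀ z : EuclideanSpace ℝ (Fin n) × ℝ,
        dist z zs ≤ ε → F01 x y lam zs ≤ F01 x y lam z := by
  intro lam hlam
  have hloc : IsLocalMin (F01 x y lam) zs := by
    rw [F01_eq]
    refine isLocalMin_add_mul_card_pos (by fun_prop)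
      (fun i => (continuous_uu x y i).continuousAt) hlam fun z hz => hglob z fun i hi => ?_
    exact (uu_nonpos_iff x y z i).1 (hz i ((uu_nonpos_iff x y zs i).2 (hfeas i hi)))
  obtain ⟨ε, hε, hball⟩ := Metric.nhds_basis_closedBall.eventually_iff.1 hloc
  exact ⟨ε, hε, fun z hz => hball (Metric.mem_closedBall.2 hz)⟩

/-- if `I*` is a separable index set of maximum cardinality and `z*`
globally minimizes the hard-margin problem `(P_{I*})`, then `z*` is a local minimizer
of `(P_{0/1})` for every `λ > 0`. -/
theorem stmt15 {n m : ℕ} (hn : 0 < n) (hm : 0 < m)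
    (x : Fin m → EuclideanSpace ℝ (Fin n)) (y : Fin m → ℝ)
    (hy : ∀ i, y i = 1 ∨ y i = -1)
    (Istar : Finset (Fin m))
    (hsep : ∃ z : EuclideanSpace ℝ (Fin n) × ℝ,
      ∀ i ∈ Istar, 1 ≤ y i * (⟪z.1, x i⟫ + z.2))
    (hmax : ∀ I : Finset (Fin m),
      (∃ z : EuclideanSpace ℝ (Fin n) × ℝ, ∀ i ∈ I, 1 ≤ y i * (⟪z.1, x i⟫ + z.2)) →
      I.card ≤ Istar.card)
    (zs : EuclideanSpace ℝ (Fin n) × ℝ)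
    (hfeas : ∀ i ∈ Istar, 1 ≤ y i * (⟪zs.1, x i⟫ + zs.2))
    (hglob : ∀ z : EuclideanSpace ℝ (Fin n) × ℝ,
      (∀ i ∈ Istar, 1 ≤ y i * (⟪z.1, x i⟫ + z.2)) →
      (1 / 2) * ‖zs.1‖ ^ 2 ≤ (1 / 2) * ‖z.1‖ ^ 2) :
    ∀ lam : ℝ, 0 < lam →
      ∃ ε > 0, ∀ z : EuclideanSpace ℝ (Fin n) × ℝ,
        dist z zs ≤ ε → F01 x y lam zs ≤ F01 x y lam z :=
  stmt15_general x y Istar zs hfeas hglob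

end
end
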